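/- In any Minkowski space with unit ball B, every complete convex body K satisfies s(K) = d_BM(K, B): the Minkowski asymmetry of a complete body equals its Banach–Mazur distance to the unit ball of the space. -/

import Mathlib

open Set Pointwise

/-- `V n` is `ℝ^n` (as a Euclidean space, also used as carrier for general
Minkowski spaces whose unit ball `B` is given as a set). -/
abbrev V (n : ℕ) := EuclideanSpace ℝ (Fin n)

/-- A convex body: compact, convex, with nonempty interior. -/
def IsConvexBody {n : ℕ} (K : Set (V n)) : Prop :=
  Convex ℝ K ∧ IsCompact K ∧ (interior K).Nonempty

/-- A (centrally) symmetric unit ball of a norm. -/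
def IsSymUnitBall {n : ℕ} (B : Set (V n)) : Prop :=
  IsConvexBody B ∧ B = -B

/-- Circumradius of `K` with respect to the unit ball `B`. -/
noncomputable def circum {n : ℕ} (B K : Set (V n)) : ℝ :=
  sInf {ρ : ℝ | 0 < ρ ∧ ∃ c : V n, K ⊆ c +ᵥ ρ • B}

/-- Inradius of `K` with respect to the unit ball `B`. -/
noncomputable def inrad {n : ℕ} (B K : Set (V n)) : ℝ :=
  sSup {ρ : ℝ | 0 < ρ ∧ ∃ c : V n, c +ᵥ ρ • B ⊆ K}

/-- Diameter of `K` in the norm with unit ball `B` (via the Minkowski gauge). -/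
noncomputable def mdiam {n : ℕ} (B K : Set (V n)) : ℝ :=
  sSup {d : ℝ | ∃ x ∈ K, ∃ y ∈ K, d = gauge B (x - y)}

/-- Minkowski asymmetry of `K`. -/
noncomputable def asym {n : ℕ} (K : Set (V n)) : ℝ :=
  sInf {ρ : ℝ | 0 < ρ ∧ ∃ c : V n, -K ⊆ c +ᵥ ρ • K}

/-- `K` is complete (diametrically maximal) w.r.t. the unit ball `B`. -/
def IsCompleteBody {n : ℕ} (B K : Set (V n)) : Prop :=
  IsConvexBody K ∧ ∀ x : V n, x ∉ K → mdiam B K < mdiam B (K ∪ {x})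

/-- `Kstar` is a completion of `K` w.r.t. the unit ball `B`. -/
def IsCompletionOf {n : ℕ} (B Kstar K : Set (V n)) : Prop :=
  IsCompleteBody B Kstar ∧ K ⊆ Kstar ∧ mdiam B Kstar = mdiam B K

/-- Jung ratio `R(K)/D(K)`. -/
noncomputable def jungRatio {n : ℕ} (B K : Set (V n)) : ℝ :=
  circum B K / mdiam B K

/-- Jung constant of the Minkowski space with unit ball `B`. -/
noncomputable def jungConst {n : ℕ} (B : Set (V n)) : ℝ :=
  sSup {j : ℝ | ∃ K : Set (V n), IsConvexBody K ∧ j = jungRatio B K}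

/-- Maximal Minkowski asymmetry over complete bodies. -/
noncomputable def asymConst {n : ℕ} (B : Set (V n)) : ℝ :=
  sSup {s : ℝ | ∃ K : Set (V n), IsCompleteBody B K ∧ s = asym K}

/-- Banach–Mazur distance between `K` and `C`. -/
noncomputable def dBM {n : ℕ} (K C : Set (V n)) : ℝ :=
  sInf {ρ : ℝ | 0 < ρ ∧ ∃ (A : (V n) ≃ᵃ[ℝ] (V n)) (x : V n),
    K ⊆ A '' C ∧ A '' C ⊆ x +ᵥ ρ • K}

/-- `S` is a `k`-dimensional simplex. -/
def IsSimplexDim {n : ℕ} (k : ℕ) (S : Set (V n)) : Prop :=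
  ∃ v : Fin (k + 1) → V n, AffineIndependent ℝ v ∧ S = convexHull ℝ (Set.range v)

/-- Helly property with parameter `k` for translates of `B`. -/
def HellyProp {n : ℕ} (B : Set (V n)) (k : ℕ) : Prop :=
  ∀ X : Set (V n), X.Nonempty →
    (∀ J : Finset (V n), ↑J ⊆ X → J.card ≤ k + 1 →
      (⋂ x ∈ (J : Set (V n)), (x +ᵥ B)).Nonempty) →
    (⋂ x ∈ X, (x +ᵥ B)).Nonempty

/-- Helly dimension of `B`: the least positive `k` with the Helly property. -/
noncomputable def hellyDim {n : ℕ} (B : Set (V n)) : ℕ :=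
  sInf {k : ℕ | 0 < k ∧ HellyProp B k}

/-- `K` is of constant width w.r.t. the unit ball `B`: `K - K` is a dilate of `B`. -/
def IsConstWidth {n : ℕ} (B K : Set (V n)) : Prop :=
  ∃ γ : ℝ, 0 < γ ∧ K - K = γ • B

/-- A regular `n`-simplex in Euclidean space. -/
def IsRegularSimplex {n : ℕ} (T : Set (V n)) : Prop :=
  ∃ v : Fin (n + 1) → V n, AffineIndependent ℝ v ∧
    (∀ i j k l, i ≠ j → k ≠ l → dist (v i) (v j) = dist (v k) (v l)) ∧
    T = convexHull ℝ (Set.range v)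

/-- The Euclidean unit ball in `ℝ^n`. -/
noncomputable def euclBall (n : ℕ) : Set (V n) := Metric.closedBall 0 1

/-- Pseudo completion of `K` with respect to the circumcenter `c`. -/
noncomputable def pseudoCompletion {n : ℕ} (B K : Set (V n)) (c : V n) : Set (V n) :=
  convexHull ℝ (K ∪ (c +ᵥ (mdiam B K - circum B K) • B))

/-!
Let `D` and `R` be the diameter and circumradius of the complete body `K`, and `c + R • B` a
circumball. Every point within distance `D` of all of `K` lies in `K`, so `c + (D - R) • B ⊆ K`,
and the homothety `b ↦ c + R • b` gives `d_BM(K, B) ≤ R / (D - R)`. Conversely, if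
`-K ⊆ a + ρ • K`, the triangle inequality puts `K` inside a ball of radius `ρ D / (1 + ρ)`, so
`R / (D - R) ≤ s(K)`. Finally `s(K) ≤ d_BM(K, B)` for every symmetric `B`: from
`K ⊆ A(B) ⊆ x + ρ • K` and the symmetry of `A(B)` about `A 0` one gets `-K ⊆ x - 2 A 0 + ρ • K`.
-/

open Filter Topology

section Gauge

variable {E : Type*} [AddCommGroup E] [Module ℝ E] [TopologicalSpace E] [IsTopologicalAddGroup E]
  [ContinuousSMul ℝ E] {s : Set E} {x c : E} {ρ : ℝ}

lemma mem_smul_set_iff_gauge_le (hc : Convex ℝ s) (hs₀ : s ∈ 𝓝 0) (hcl : IsClosed s)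
    (hρ : 0 < ρ) : x ∈ ρ • s ↔ gauge s x ≤ ρ := by
  have h := gauge_le_one_iff_mem_closure hc hs₀ (x := ρ⁻¹ • x)
  rw [hcl.closure_eq, gauge_smul_of_nonneg (inv_nonneg.2 hρ.le), smul_eq_mul,
    inv_mul_le_one₀ hρ] at h
  rw [mem_smul_set_iff_inv_smul_mem₀ hρ.ne', h]

lemma mem_vadd_smul_set_iff_gauge_sub_le (hc : Convex ℝ s) (hs₀ : s ∈ 𝓝 0) (hcl : IsClosed s)
    (hρ : 0 < ρ) : x ∈ c +ᵥ ρ • s ↔ gauge s (x - c) ≤ ρ := by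
  rw [mem_vadd_set_iff_neg_vadd_mem, vadd_eq_add, neg_add_eq_sub,
    mem_smul_set_iff_gauge_le hc hs₀ hcl hρ]

end Gauge

section SymUnitBall

variable {n : ℕ} {B : Set (V n)} {x : V n}

lemma IsSymUnitBall.neg_mem (hB : IsSymUnitBall B) (hx : x ∈ B) : -x ∈ B := by
  rw [hB.2] at hx
  exact hx

lemma IsSymUnitBall.mem_nhds_zero (hB : IsSymUnitBall B) : B ∈ 𝓝 0 := by
  obtain ⟨p, hp⟩ := hB.1.2.2
  have hnp : -p ∈ interior B := by
    rw [hB.2, ← Set.image_neg_eq_neg]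
    exact (Homeomorph.neg (V n)).image_interior B ▸ Set.mem_image_of_mem _ hp
  have h0 := hB.1.1.interior hp hnp (by norm_num : (0 : ℝ) ≤ 1 / 2)
    (by norm_num : (0 : ℝ) ≤ 1 / 2) (by norm_num)
  rw [smul_neg, add_neg_cancel] at h0
  exact mem_interior_iff_mem_nhds.1 h0

lemma IsSymUnitBall.mem_vadd_smul_iff (hB : IsSymUnitBall B) {c : V n} {ρ : ℝ} (hρ : 0 < ρ) :
    x ∈ c +ᵥ ρ • B ↔ gauge B (x - c) ≤ ρ :=
  mem_vadd_smul_set_iff_gauge_sub_le hB.1.1 hB.mem_nhds_zero hB.1.2.1.isClosed hρ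

lemma IsSymUnitBall.gauge_sub_comm (hB : IsSymUnitBall B) (x y : V n) :
    gauge B (x - y) = gauge B (y - x) := by
  rw [← neg_sub, gauge_neg fun _ ↦ hB.neg_mem]

lemma IsSymUnitBall.gauge_sub_le (hB : IsSymUnitBall B) (x y z : V n) :
    gauge B (x - z) ≤ gauge B (x - y) + gauge B (y - z) := by
  rw [← sub_add_sub_cancel x y z]
  exact gauge_add_le hB.1.1 (absorbent_nhds_zero hB.mem_nhds_zero) _ _

lemma IsSymUnitBall.gauge_eq_zero (hB : IsSymUnitBall B) : gauge B x = 0 ↔ x = 0 :=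
  _root_.gauge_eq_zero (absorbent_nhds_zero hB.mem_nhds_zero) (hB.1.2.1.isVonNBounded (𝕜 := ℝ))

end SymUnitBall

section Radii

variable {n : ℕ} {B K : Set (V n)} {x y c : V n} {ρ r : ℝ}

lemma mdiam_nonneg : 0 ≤ mdiam B K :=
  Real.sSup_nonneg (by rintro d ⟨x, -, y, -, rfl⟩; exact gauge_nonneg _)

lemma mdiam_le (hr : 0 ≤ r) (h : ∀ x ∈ K, ∀ y ∈ K, gauge B (x - y) ≤ r) : mdiam B K ≤ r :=
  Real.sSup_le (by rintro d ⟨x, hx, y, hy, rfl⟩; exact h x hx y hy) hr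

lemma gauge_sub_le_mdiam (hB : IsSymUnitBall B) (hK : IsCompact K) (hx : x ∈ K) (hy : y ∈ K) :
    gauge B (x - y) ≤ mdiam B K := by
  refine le_csSup ?_ ⟨x, hx, y, hy, rfl⟩
  obtain ⟨M, hM⟩ := (hK.prod hK).bddAbove_image ((continuous_gauge hB.1.1 hB.mem_nhds_zero).comp
    (continuous_fst.sub continuous_snd)).continuousOn
  exact ⟨M, by rintro d ⟨x, hx, y, hy, rfl⟩; exact hM ⟨(x, y), ⟨hx, hy⟩, rfl⟩⟩

lemma IsCompleteBody.mem_of_forall_gauge_sub_le_mdiam (hB : IsSymUnitBall B)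
    (hK : IsCompleteBody B K) (hy : ∀ x ∈ K, gauge B (y - x) ≤ mdiam B K) : y ∈ K := by
  by_contra hyK
  refine (hK.2 y hyK).not_ge (mdiam_le mdiam_nonneg ?_)
  rintro u (hu | rfl) w (hw | rfl)
  · exact gauge_sub_le_mdiam hB hK.1.2.1 hu hw
  · exact hB.gauge_sub_comm u w ▸ hy u hu
  · exact hy w hw
  · rw [sub_self, gauge_zero]
    exact mdiam_nonneg

lemma circum_nonneg : 0 ≤ circum B K :=
  Real.sInf_nonneg fun _ h ↦ h.1.le

lemma circum_le (hB : IsSymUnitBall B) (hr : 0 ≤ r) (h : ∀ x ∈ K, gauge B (x - c) ≤ r) :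
    circum B K ≤ r := by
  refine le_of_forall_pos_le_add fun ε hε ↦ csInf_le ⟨0, fun _ h ↦ h.1.le⟩ ⟨by positivity, c, ?_⟩
  exact fun x hx ↦ (hB.mem_vadd_smul_iff (by positivity)).2 ((h x hx).trans (by linarith))

lemma exists_forall_gauge_sub_le_of_circum_lt (hB : IsSymUnitBall B) (hK : IsCompact K)
    (h : circum B K < r) : ∃ c, ∀ x ∈ K, gauge B (x - c) ≤ r := by
  have hne : {ρ : ℝ | 0 < ρ ∧ ∃ c : V n, K ⊆ c +ᵥ ρ • B}.Nonempty := by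
    obtain ⟨M, hM⟩ := hK.bddAbove_image (continuous_gauge hB.1.1 hB.mem_nhds_zero).continuousOn
    refine ⟨max M 0 + 1, by positivity, 0, fun x hx ↦ (hB.mem_vadd_smul_iff (by positivity)).2 ?_⟩
    rw [sub_zero]
    exact (hM (mem_image_of_mem _ hx)).trans (by linarith [le_max_left M 0])
  obtain ⟨ρ, ⟨hρ, c, hc⟩, hρr⟩ := exists_lt_of_csInf_lt hne h
  exact ⟨c, fun x hx ↦ ((hB.mem_vadd_smul_iff hρ).1 (hc hx)).trans hρr.le⟩

-- The centres `c` with `K ⊆ c + (R + 1/(k+1)) • B` form a decreasing sequence of nonempty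
-- compact sets.
lemma exists_forall_gauge_sub_le_circum (hB : IsSymUnitBall B) (hK : IsCompact K)
    (hne : K.Nonempty) : ∃ c, ∀ x ∈ K, gauge B (x - c) ≤ circum B K := by
  obtain ⟨p, hp⟩ := hne
  set t : ℕ → Set (V n) := fun k ↦ {c | ∀ x ∈ K, gauge B (x - c) ≤ circum B K + 1 / (k + 1)}
  have ht_anti : ∀ k, t (k + 1) ⊆ t k := fun k c hc x hx ↦ (hc x hx).trans (by
    gcongr
    linarith)
  have ht_ne : ∀ k, (t k).Nonempty := fun k ↦
    exists_forall_gauge_sub_le_of_circum_lt hB hK (lt_add_of_pos_right _ (by positivity))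
  have ht_closed : ∀ k, IsClosed (t k) := fun k ↦ by
    simp only [t, ofPred_forall]
    exact isClosed_biInter fun x _ ↦ isClosed_le
      ((continuous_gauge hB.1.1 hB.mem_nhds_zero).comp (continuous_const.sub continuous_id))
      continuous_const
  have ht_compact : IsCompact (t 0) := by
    refine ((hB.1.2.1.smul (circum B K + 1)).vadd p).of_isClosed_subset (ht_closed 0)
      fun c hc ↦ ?_
    rw [hB.mem_vadd_smul_iff (by linarith [circum_nonneg (B := B) (K := K)]), hB.gauge_sub_comm]
    simpa using hc p hp
  obtain ⟨c, hc⟩ := IsCompact.nonempty_iInter_of_sequence_nonempty_isCompact_isClosed t ht_anti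
    ht_ne ht_compact ht_closed
  refine ⟨c, fun x hx ↦ le_of_forall_pos_le_add fun ε hε ↦ ?_⟩
  obtain ⟨k, hk⟩ := exists_nat_one_div_lt hε
  exact (mem_iInter.1 hc k x hx).trans (by linarith)

lemma circum_pos [Nontrivial (V n)] (hB : IsSymUnitBall B) (hK : IsConvexBody K) :
    0 < circum B K := by
  obtain ⟨c, hc⟩ := exists_forall_gauge_sub_le_circum hB hK.2.1 (hK.2.2.mono interior_subset)
  refine circum_nonneg.lt_of_ne fun h ↦ ?_
  have hKc : K ⊆ {c} := fun x hx ↦ sub_eq_zero.1 <| hB.gauge_eq_zero.1 <|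
    ((hc x hx).trans h.symm.le).antisymm (gauge_nonneg _)
  simpa [interior_singleton] using hK.2.2.mono (interior_mono hKc)

end Radii

section Asymmetry

lemma exists_neg_subset_vadd_smul_self {E : Type*} [NormedAddCommGroup E] [NormedSpace ℝ E]
    {K : Set E} {p : E} (hK : IsCompact K) (hp : p ∈ interior K) :
    ∃ ρ : ℝ, 0 < ρ ∧ ∃ c : E, -K ⊆ c +ᵥ ρ • K := by
  have hA : (p + ·) ⁻¹' K ∈ 𝓝 (0 : E) := (continuous_const_add p).continuousAt.preimage_mem_nhds
    (by simpa using mem_interior_iff_mem_nhds.1 hp)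
  obtain ⟨r, hr, hsub⟩ :=
    ((hK.neg.image (continuous_const_add p)).isVonNBounded (𝕜 := ℝ) hA).exists_pos
  refine ⟨r, hr, -p - r • p, fun w hw ↦ ?_⟩
  obtain ⟨a, ha, hwa⟩ := hsub r (by rw [Real.norm_of_nonneg hr.le]) ⟨w, hw, rfl⟩
  refine ⟨r • (p + a), smul_mem_smul_set ha, ?_⟩
  show -p - r • p + r • (p + a) = w
  simp only at hwa
  linear_combination (norm := module) hwa

variable {n : ℕ} {B K C : Set (V n)} {ρ r s : ℝ} {a c : V n}

/-- If `-K ⊆ a + ρ • K`, then `K` lies in the ball of radius `ρ D / (1 + ρ)` about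
`-a / (1 + ρ)`. -/
lemma circum_mul_one_add_le (hB : IsSymUnitBall B) (hK : IsCompact K) (hρ : 0 < ρ)
    (ha : -K ⊆ a +ᵥ ρ • K) : circum B K * (1 + ρ) ≤ ρ * mdiam B K := by
  have h1ρ : 0 < 1 + ρ := by linarith
  rw [← le_div_iff₀ h1ρ]
  refine circum_le hB (c := -(1 + ρ)⁻¹ • a) (by positivity [mdiam_nonneg (B := B) (K := K)])
    fun x hx ↦ ?_
  obtain ⟨_, ⟨y, hy, rfl⟩, hxy⟩ := ha (neg_mem_neg.2 hx)
  have hsplit : x - -(1 + ρ)⁻¹ • a = (1 + ρ)⁻¹ • ((1 + ρ) • x + a) := by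
    rw [smul_add, smul_smul, inv_mul_cancel₀ h1ρ.ne', one_smul]
    module
  have hdiff : (1 + ρ) • x + a = ρ • (x - y) := by
    simp only [vadd_eq_add] at hxy
    linear_combination (norm := module) hxy
  rw [hsplit, hdiff, gauge_smul_of_nonneg (by positivity), gauge_smul_of_nonneg hρ.le,
    smul_eq_mul, smul_eq_mul, ← mul_assoc, inv_mul_eq_div, div_mul_eq_mul_div]
  gcongr
  exact gauge_sub_le_mdiam hB hK hx hy

lemma IsCompleteBody.vadd_smul_subset (hB : IsSymUnitBall B) (hK : IsCompleteBody B K)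
    (hc : ∀ x ∈ K, gauge B (x - c) ≤ circum B K) (h : circum B K < mdiam B K) :
    c +ᵥ (mdiam B K - circum B K) • B ⊆ K := fun z hz ↦ by
  rw [hB.mem_vadd_smul_iff (sub_pos.2 h)] at hz
  refine hK.mem_of_forall_gauge_sub_le_mdiam hB fun x hx ↦ ?_
  linarith [hB.gauge_sub_le z c x, hB.gauge_sub_comm c x ▸ hc x hx]

lemma le_asym (hne : ∃ ρ : ℝ, 0 < ρ ∧ ∃ c : V n, -K ⊆ c +ᵥ ρ • K)
    (h : ∀ ρ > 0, ∀ c : V n, -K ⊆ c +ᵥ ρ • K → r ≤ ρ) : r ≤ asym K := by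
  obtain ⟨ρ, hρ, c, hc⟩ := hne
  exact le_csInf ⟨ρ, hρ, c, hc⟩ fun ρ ⟨hρ, c, hc⟩ ↦ h ρ hρ c hc

lemma dBM_le (hρ : 0 < ρ) (A : V n ≃ᵃ[ℝ] V n) (x : V n) (h₁ : K ⊆ A '' C)
    (h₂ : A '' C ⊆ x +ᵥ ρ • K) : dBM K C ≤ ρ :=
  csInf_le ⟨0, fun _ h ↦ h.1.le⟩ ⟨hρ, A, x, h₁, h₂⟩

lemma neg_subset_vadd_smul_of_subset_image (hC : -C = C) {A : V n ≃ᵃ[ℝ] V n} {x : V n}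
    (h₁ : K ⊆ A '' C) (h₂ : A '' C ⊆ x +ᵥ ρ • K) : -K ⊆ (x - 2 • A 0) +ᵥ ρ • K := by
  intro w hw
  obtain ⟨b, hb, hbw⟩ := h₁ hw
  obtain ⟨_, ⟨k, hk, rfl⟩, hk'⟩ := h₂ ⟨-b, hC ▸ neg_mem_neg.2 hb, rfl⟩
  have e₁ := A.map_vadd 0 b
  have e₂ := A.map_vadd 0 (-b)
  simp only [vadd_eq_add, add_zero, map_neg] at e₁ e₂ hk'
  refine ⟨ρ • k, smul_mem_smul_set hk, ?_⟩
  show x - 2 • A 0 + ρ • k = w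
  linear_combination (norm := module) hk' + e₂ + e₁ - hbw

lemma asym_le_dBM (hC : -C = C) (hne : ∃ ρ : ℝ, 0 < ρ ∧ ∃ (A : V n ≃ᵃ[ℝ] V n) (x : V n),
    K ⊆ A '' C ∧ A '' C ⊆ x +ᵥ ρ • K) : asym K ≤ dBM K C := by
  obtain ⟨ρ, hρ, A, x, h₁, h₂⟩ := hne
  exact csInf_le_csInf ⟨0, fun _ h ↦ h.1.le⟩ ⟨ρ, hρ, A, x, h₁, h₂⟩
    fun ρ ⟨hρ, _, _, h₁, h₂⟩ ↦ ⟨hρ, _, neg_subset_vadd_smul_of_subset_image hC h₁ h₂⟩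

lemma exists_subset_affineEquiv_image_subset (hr : 0 < r) (hs : 0 < s)
    (hin : c +ᵥ s • C ⊆ K) (hout : K ⊆ c +ᵥ r • C) :
    ∃ (A : V n ≃ᵃ[ℝ] V n) (x : V n), K ⊆ A '' C ∧ A '' C ⊆ x +ᵥ (r / s) • K := by
  let A : V n ≃ᵃ[ℝ] V n := (LinearEquiv.smulOfNeZero ℝ (V n) r hr.ne').toAffineEquiv.trans
    (AffineEquiv.constVAdd ℝ (V n) c)
  have hA : A '' C = c +ᵥ r • C := by
    rw [← image_smul, ← image_vadd, image_image]
    rfl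
  refine ⟨A, c - (r / s) • c, hA ▸ hout, ?_⟩
  rw [hA]
  rintro _ ⟨_, ⟨b, hb, rfl⟩, rfl⟩
  refine ⟨(r / s) • (c + s • b), smul_mem_smul_set (hin ⟨s • b, smul_mem_smul_set hb, rfl⟩), ?_⟩
  show c - (r / s) • c + (r / s) • (c + s • b) = c + r • b
  rw [smul_add, smul_smul, div_mul_cancel₀ r hs.ne']
  abel

lemma asym_eq_dBM_of_subsingleton [Subsingleton (V n)] (hK : K.Nonempty) (hC : C.Nonempty) :
    asym K = dBM K C := by
  have hfull : ∀ (ρ : ℝ) (c : V n), c +ᵥ ρ • K = univ := fun ρ c ↦ (hK.smul_set.vadd_set).eq_univ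
  show sInf _ = sInf _
  congr 1
  ext ρ
  refine ⟨fun ⟨hρ, _⟩ ↦ ⟨hρ, AffineEquiv.refl ℝ _, 0, ?_, ?_⟩, fun ⟨hρ, _⟩ ↦ ⟨hρ, 0, ?_⟩⟩
  · rw [hK.eq_univ, ((hC.image _).eq_univ)]
  · rw [hfull]
    exact subset_univ _
  · rw [hfull]
    exact subset_univ _

end Asymmetry

/-- For a complete body, the Minkowski asymmetry equals the Banach–Mazur
distance to the unit ball of the space. -/
theorem stmt8 {n : ℕ} (B K : Set (V n)) (hB : IsSymUnitBall B)
    (hK : IsCompleteBody B K) :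
    asym K = dBM K B := by
  have hKc : IsCompact K := hK.1.2.1
  obtain ⟨p, hp⟩ := hK.1.2.2
  rcases subsingleton_or_nontrivial (V n) with _ | _
  · exact asym_eq_dBM_of_subsingleton ⟨p, interior_subset hp⟩ (hB.1.2.2.mono interior_subset)
  set R := circum B K
  set D := mdiam B K
  obtain ⟨c, hc⟩ := exists_forall_gauge_sub_le_circum hB hKc ⟨p, interior_subset hp⟩
  have hR : 0 < R := circum_pos hB hK.1
  obtain ⟨ρ₁, hρ₁, a₁, ha₁⟩ := exists_neg_subset_vadd_smul_self hKc hp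
  have hRD : 0 < D - R := by nlinarith [circum_mul_one_add_le hB hKc hρ₁ ha₁]
  obtain ⟨A, x, h₁, h₂⟩ := exists_subset_affineEquiv_image_subset hR hRD
    (hK.vadd_smul_subset hB hc (sub_pos.1 hRD)) fun y hy ↦ (hB.mem_vadd_smul_iff hR).2 (hc y hy)
  have hasym : R / (D - R) ≤ asym K := le_asym ⟨ρ₁, hρ₁, a₁, ha₁⟩ fun ρ hρ a ha ↦ by
    rw [div_le_iff₀ hRD]
    nlinarith [circum_mul_one_add_le hB hKc hρ ha]
  exact le_antisymm (asym_le_dBM hB.2.symm ⟨_, div_pos hR hRD, A, x, h₁, h₂⟩)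
    ((dBM_le (div_pos hR hRD) A x h₁ h₂).trans hasym)
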